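/- In any orthomodular lattice, if a commutes with b and b commutes with c, then (a ∪₃ b) ∪₃ c = a ∪₃ (b ∪₃ c), where x ∪₃ y := (x ∩ y) ∪ (x ∩ y') ∪ (x' ∩ (x ∪ y)). -/

import Mathlib

class Ortholattice (α : Type*) extends Lattice α, BoundedOrder α, Compl α where
  compl_compl : ∀ a : α, aᶜᶜ = a
  sup_compl : ∀ a : α, a ⊔ aᶜ = ⊤
  inf_compl : ∀ a : α, a ⊓ aᶜ = ⊥
  compl_antitone : ∀ a b : α, a ≤ b → bᶜ ≤ aᶜ

class OrthomodularLattice (α : Type*) extends Ortholattice α where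
  orthomodular : ∀ a b : α, a ≤ b → b = a ⊔ (aᶜ ⊓ b)

section OML
variable {α : Type*} [OrthomodularLattice α]

private lemma cc (a : α) : aᶜᶜ = a := Ortholattice.compl_compl a
private lemma icompl (a : α) : a ⊓ aᶜ = ⊥ := Ortholattice.inf_compl a
private lemma anti {a b : α} (h : a ≤ b) : bᶜ ≤ aᶜ := Ortholattice.compl_antitone a b h
private lemma om {a b : α} (h : a ≤ b) : a ⊔ (aᶜ ⊓ b) = b :=
  (OrthomodularLattice.orthomodular a b h).symm

private lemma le_compl_of {a b : α} (h : a ≤ bᶜ) : b ≤ aᶜ := by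
  have := anti h; rwa [cc] at this

private lemma bot_of {p q : α} (h1 : p ≤ q) (h2 : p ≤ qᶜ) : p = ⊥ :=
  le_bot_iff.mp ((le_inf h1 h2).trans (icompl q).le)

private lemma compl_sup' (a b : α) : (a ⊔ b)ᶜ = aᶜ ⊓ bᶜ := by
  apply le_antisymm (le_inf (anti le_sup_left) (anti le_sup_right))
  have ha : a ≤ (aᶜ ⊓ bᶜ)ᶜ := le_compl_of inf_le_left
  have hb : b ≤ (aᶜ ⊓ bᶜ)ᶜ := le_compl_of inf_le_right
  have := anti (sup_le ha hb); rwa [cc] at this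

private lemma compl_inf' (a b : α) : (a ⊓ b)ᶜ = aᶜ ⊔ bᶜ := by
  have h := compl_sup' aᶜ bᶜ
  rw [cc, cc] at h
  rw [← h, cc]

private lemma lemL (x z : α) : xᶜ ⊓ (x ⊔ (xᶜ ⊓ z)) = xᶜ ⊓ z := by
  have hq1 : xᶜ ⊓ z ≤ xᶜ ⊓ (x ⊔ (xᶜ ⊓ z)) := le_inf inf_le_left le_sup_right
  have h2 := om hq1
  have h3 : (xᶜ ⊓ z)ᶜ ⊓ (xᶜ ⊓ (x ⊔ (xᶜ ⊓ z))) = ⊥ := by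
    apply bot_of (q := x ⊔ (xᶜ ⊓ z))
    · exact inf_le_right.trans inf_le_right
    · rw [compl_sup']
      exact le_inf (inf_le_right.trans inf_le_left) inf_le_left
  rw [h3, sup_bot_eq] at h2
  exact h2.symm

def Cm (a b : α) : Prop := a = (a ⊓ b) ⊔ (a ⊓ bᶜ)

private lemma Cm.comple {a b : α} (h : Cm a b) : Cm a bᶜ := by
  show a = (a ⊓ bᶜ) ⊔ (a ⊓ bᶜᶜ)
  rw [cc, sup_comm]; exact h

private lemma Cm.symm' {a b : α} (h : Cm a b) : Cm b a := by
  have h1 : (b ⊓ a) ⊔ (b ⊓ aᶜ) ≤ b := sup_le inf_le_left inf_le_left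
  have h2 := om h1
  have ha : a ≤ ((b ⊓ a) ⊔ (b ⊓ aᶜ)) ⊔ bᶜ := by
    nth_rewrite 1 [h]
    refine sup_le ?_ (inf_le_right.trans le_sup_right)
    exact ((le_inf inf_le_right inf_le_left).trans le_sup_left).trans le_sup_left
  have hb : ((b ⊓ a) ⊔ (b ⊓ aᶜ))ᶜ ⊓ b ≤ aᶜ := by
    have h5 := anti ha
    rw [compl_sup', cc] at h5
    exact h5
  have hble : ((b ⊓ a) ⊔ (b ⊓ aᶜ))ᶜ ⊓ b ≤ (b ⊓ a) ⊔ (b ⊓ aᶜ) :=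
    (le_inf inf_le_right hb).trans le_sup_right
  have hbot : ((b ⊓ a) ⊔ (b ⊓ aᶜ))ᶜ ⊓ b = ⊥ := bot_of hble inf_le_left
  rw [hbot, sup_bot_eq] at h2
  exact h2.symm

private lemma Cm.refl' (a : α) : Cm a a := by
  show a = (a ⊓ a) ⊔ (a ⊓ aᶜ)
  rw [inf_idem, icompl, sup_bot_eq]

private lemma Cm.sup_left' {x y b : α} (hx : Cm x b) (hy : Cm y b) : Cm (x ⊔ y) b := by
  show x ⊔ y = ((x ⊔ y) ⊓ b) ⊔ ((x ⊔ y) ⊓ bᶜ)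
  apply le_antisymm
  · apply sup_le
    · nth_rewrite 1 [hx]
      exact sup_le ((inf_le_inf_right b le_sup_left).trans le_sup_left)
        ((inf_le_inf_right bᶜ le_sup_left).trans le_sup_right)
    · nth_rewrite 1 [hy]
      exact sup_le ((inf_le_inf_right b le_sup_right).trans le_sup_left)
        ((inf_le_inf_right bᶜ le_sup_right).trans le_sup_right)
  · exact sup_le inf_le_left inf_le_left

private lemma Cm.compl_left' {x b : α} (h : Cm x b) : Cm xᶜ b :=
  (h.symm'.comple).symm'

private lemma Cm.inf_left' {x y b : α} (hx : Cm x b) (hy : Cm y b) : Cm (x ⊓ y) b := by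
  have h := ((hx.compl_left'.sup_left' hy.compl_left').compl_left' : Cm (xᶜ ⊔ yᶜ)ᶜ b)
  rwa [compl_sup', cc, cc] at h

private lemma Cm.sup_right' {b x y : α} (hx : Cm b x) (hy : Cm b y) : Cm b (x ⊔ y) :=
  ((hx.symm').sup_left' (hy.symm')).symm'

private lemma key1 {a b : α} (h : Cm a b) : bᶜ ⊓ (a ⊔ b) = a ⊓ bᶜ := by
  have hs : a ⊔ b = b ⊔ (bᶜ ⊓ a) := by
    apply le_antisymm
    · refine sup_le ?_ le_sup_left
      nth_rewrite 1 [h]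
      exact sup_le (inf_le_right.trans le_sup_left)
        ((le_inf inf_le_right inf_le_left).trans le_sup_right)
    · exact sup_le le_sup_right (inf_le_right.trans le_sup_left)
  rw [hs, lemL]
  exact inf_comm _ _

private lemma key2 {a b : α} (h : Cm a b) : a ⊓ (aᶜ ⊔ b) = a ⊓ b := by
  have h1 := key1 (h.symm'.comple)
  rw [cc] at h1
  rw [sup_comm] at h1
  rw [h1, inf_comm]

private lemma FH {a b c : α} (hba : Cm b a) (hbc : Cm b c) :
    (a ⊔ b) ⊓ c = (a ⊓ c) ⊔ (b ⊓ c) := by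
  have he : (a ⊓ c) ⊔ (b ⊓ c) ≤ (a ⊔ b) ⊓ c :=
    sup_le (inf_le_inf_right c le_sup_left) (inf_le_inf_right c le_sup_right)
  have h2 := om he
  have hcb : c ⊓ (cᶜ ⊔ bᶜ) = c ⊓ bᶜ := key2 (hbc.symm'.comple)
  have hab' : bᶜ ⊓ (a ⊔ b) = a ⊓ bᶜ := key1 hba.symm'
  have e_le1 : ((a ⊓ c) ⊔ (b ⊓ c))ᶜ ⊓ ((a ⊔ b) ⊓ c) ≤ bᶜ := by
    have h3 : ((a ⊓ c) ⊔ (b ⊓ c))ᶜ ⊓ ((a ⊔ b) ⊓ c) ≤ c ⊓ (cᶜ ⊔ bᶜ) := by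
      refine le_inf (inf_le_right.trans inf_le_right) ?_
      have h4 : ((a ⊓ c) ⊔ (b ⊓ c))ᶜ ≤ (b ⊓ c)ᶜ := anti le_sup_right
      rw [compl_inf'] at h4
      exact inf_le_left.trans (h4.trans (sup_comm bᶜ cᶜ).le)
    rw [hcb] at h3
    exact h3.trans inf_le_right
  have e_le2 : ((a ⊓ c) ⊔ (b ⊓ c))ᶜ ⊓ ((a ⊔ b) ⊓ c) ≤ a := by
    have h4 : ((a ⊓ c) ⊔ (b ⊓ c))ᶜ ⊓ ((a ⊔ b) ⊓ c) ≤ bᶜ ⊓ (a ⊔ b) :=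
      le_inf e_le1 (inf_le_right.trans inf_le_left)
    rw [hab'] at h4
    exact h4.trans inf_le_left
  have hbot : ((a ⊓ c) ⊔ (b ⊓ c))ᶜ ⊓ ((a ⊔ b) ⊓ c) = ⊥ := by
    apply bot_of (q := a ⊓ c)
    · exact le_inf e_le2 (inf_le_right.trans inf_le_right)
    · exact inf_le_left.trans (anti le_sup_left)
  rw [hbot, sup_bot_eq] at h2
  exact h2.symm

private lemma FH2 {a b c : α} (hab : Cm a b) (hac : Cm a c) :
    a ⊓ (b ⊔ c) = (a ⊓ b) ⊔ (a ⊓ c) := by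
  have he : (a ⊓ b) ⊔ (a ⊓ c) ≤ a ⊓ (b ⊔ c) :=
    sup_le (inf_le_inf_left a le_sup_left) (inf_le_inf_left a le_sup_right)
  have h2 := om he
  have k1 : a ⊓ (aᶜ ⊔ bᶜ) = a ⊓ bᶜ := key2 hab.comple
  have k2 : a ⊓ (aᶜ ⊔ cᶜ) = a ⊓ cᶜ := key2 hac.comple
  have le_b : ((a ⊓ b) ⊔ (a ⊓ c))ᶜ ⊓ (a ⊓ (b ⊔ c)) ≤ bᶜ := by
    have h3 : ((a ⊓ b) ⊔ (a ⊓ c))ᶜ ⊓ (a ⊓ (b ⊔ c)) ≤ a ⊓ (aᶜ ⊔ bᶜ) := by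
      refine le_inf (inf_le_right.trans inf_le_left) ?_
      have he1 : ((a ⊓ b) ⊔ (a ⊓ c))ᶜ ≤ (a ⊓ b)ᶜ := anti le_sup_left
      rw [compl_inf'] at he1
      exact inf_le_left.trans he1
    rw [k1] at h3
    exact h3.trans inf_le_right
  have le_c : ((a ⊓ b) ⊔ (a ⊓ c))ᶜ ⊓ (a ⊓ (b ⊔ c)) ≤ cᶜ := by
    have h3 : ((a ⊓ b) ⊔ (a ⊓ c))ᶜ ⊓ (a ⊓ (b ⊔ c)) ≤ a ⊓ (aᶜ ⊔ cᶜ) := by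
      refine le_inf (inf_le_right.trans inf_le_left) ?_
      have he1 : ((a ⊓ b) ⊔ (a ⊓ c))ᶜ ≤ (a ⊓ c)ᶜ := anti le_sup_right
      rw [compl_inf'] at he1
      exact inf_le_left.trans he1
    rw [k2] at h3
    exact h3.trans inf_le_right
  have hbot : ((a ⊓ b) ⊔ (a ⊓ c))ᶜ ⊓ (a ⊓ (b ⊔ c)) = ⊥ := by
    apply bot_of (q := b ⊔ c)
    · exact inf_le_right.trans inf_le_right
    · exact le_trans (le_inf le_b le_c) (compl_sup' b c).ge
  rw [hbot, sup_bot_eq] at h2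
  exact h2.symm

private lemma absorb {b p q : α} : b ⊔ ((p ⊓ b) ⊔ q) = b ⊔ q :=
  le_antisymm (sup_le le_sup_left (sup_le (inf_le_right.trans le_sup_left) le_sup_right))
    (sup_le le_sup_left (le_sup_right.trans le_sup_right))

end OML

theorem stmt7 {α : Type*} [OrthomodularLattice α] (a b c : α) (hab : a = (a ⊓ b) ⊔ (a ⊓ bᶜ)) (hbc : b = (b ⊓ c) ⊔ (b ⊓ cᶜ)) :
    (((a ⊓ b) ⊔ (a ⊓ bᶜ) ⊔ (aᶜ ⊓ (a ⊔ b))) ⊓ c) ⊔ (((a ⊓ b) ⊔ (a ⊓ bᶜ) ⊔ (aᶜ ⊓ (a ⊔ b))) ⊓ cᶜ) ⊔ (((a ⊓ b) ⊔ (a ⊓ bᶜ) ⊔ (aᶜ ⊓ (a ⊔ b)))ᶜ ⊓ (((a ⊓ b) ⊔ (a ⊓ bᶜ) ⊔ (aᶜ ⊓ (a ⊔ b))) ⊔ c)) =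
      (a ⊓ ((b ⊓ c) ⊔ (b ⊓ cᶜ) ⊔ (bᶜ ⊓ (b ⊔ c)))) ⊔ (a ⊓ ((b ⊓ c) ⊔ (b ⊓ cᶜ) ⊔ (bᶜ ⊓ (b ⊔ c)))ᶜ) ⊔ (aᶜ ⊓ (a ⊔ ((b ⊓ c) ⊔ (b ⊓ cᶜ) ⊔ (bᶜ ⊓ (b ⊔ c))))) := by
  have Hab : Cm a b := hab
  have Hbc : Cm b c := hbc
  have Hba : Cm b a := Hab.symm'
  have hba' : b = (b ⊓ a) ⊔ (b ⊓ aᶜ) := Hba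
  have hu : (a ⊓ b) ⊔ (a ⊓ bᶜ) ⊔ (aᶜ ⊓ (a ⊔ b)) = a ⊔ b := by
    rw [← hab]; exact om le_sup_left
  have hv : (b ⊓ c) ⊔ (b ⊓ cᶜ) ⊔ (bᶜ ⊓ (b ⊔ c)) = b ⊔ c := by
    rw [← hbc]; exact om le_sup_left
  rw [hu, hv]
  -- distribute the three components on each side
  have h1 : (a ⊔ b) ⊓ c = (a ⊓ c) ⊔ (b ⊓ c) := FH Hba Hbc
  have h2 : (a ⊔ b) ⊓ cᶜ = (a ⊓ cᶜ) ⊔ (b ⊓ cᶜ) := FH Hba Hbc.comple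
  have h3 : (a ⊔ b)ᶜ ⊓ ((a ⊔ b) ⊔ c) = aᶜ ⊓ (bᶜ ⊓ (a ⊔ c)) := by
    rw [compl_sup']
    have hs : (a ⊔ b) ⊔ c = (a ⊔ c) ⊔ b := by ac_rfl
    rw [hs, inf_assoc]
    congr 1
    have hfh := FH2 (Cm.sup_right' Hba.compl_left' Hbc.compl_left')
      ((Cm.refl' b).compl_left')
    rw [hfh]
    have hbb : bᶜ ⊓ b = ⊥ := by rw [inf_comm]; exact icompl b
    rw [hbb, sup_bot_eq]
  have h4 : a ⊓ (b ⊔ c) = (a ⊓ b) ⊔ (a ⊓ c) := by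
    calc a ⊓ (b ⊔ c) = (c ⊔ b) ⊓ a := by rw [inf_comm, sup_comm]
      _ = (c ⊓ a) ⊔ (b ⊓ a) := FH Hbc Hba
      _ = (a ⊓ b) ⊔ (a ⊓ c) := by ac_rfl
  have h5 : a ⊓ (b ⊔ c)ᶜ = a ⊓ (bᶜ ⊓ cᶜ) := by rw [compl_sup']
  have h6 : aᶜ ⊓ (a ⊔ (b ⊔ c)) = (aᶜ ⊓ b) ⊔ (aᶜ ⊓ (a ⊔ c)) := by
    have hs : a ⊔ (b ⊔ c) = (a ⊔ c) ⊔ b := by ac_rfl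
    rw [hs, inf_comm]
    rw [FH (Cm.sup_right' Hba Hbc) Hba.comple]
    ac_rfl
  rw [h1, h2, h3, h4, h5, h6]
  -- absorption equalities
  have E1 : b ⊔ (a ⊓ cᶜ) = b ⊔ (a ⊓ (bᶜ ⊓ cᶜ)) := by
    have hsplit : a ⊓ cᶜ = ((a ⊓ cᶜ) ⊓ b) ⊔ ((a ⊓ cᶜ) ⊓ bᶜ) :=
      Cm.inf_left' Hab (Hbc.symm'.compl_left')
    rw [hsplit, absorb]
    congr 1
    ac_rfl
  have E2 : b ⊔ (aᶜ ⊓ (a ⊔ c)) = b ⊔ (aᶜ ⊓ (bᶜ ⊓ (a ⊔ c))) := by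
    have hsplit : aᶜ ⊓ (a ⊔ c) = ((aᶜ ⊓ (a ⊔ c)) ⊓ b) ⊔ ((aᶜ ⊓ (a ⊔ c)) ⊓ bᶜ) :=
      Cm.inf_left' Hab.compl_left' (Cm.sup_left' Hab Hbc.symm')
    rw [hsplit, absorb]
    congr 1
    ac_rfl
  have hL : ((a ⊓ c) ⊔ (b ⊓ c)) ⊔ ((a ⊓ cᶜ) ⊔ (b ⊓ cᶜ)) ⊔ (aᶜ ⊓ (bᶜ ⊓ (a ⊔ c)))
      = b ⊔ ((a ⊓ c) ⊔ ((a ⊓ (bᶜ ⊓ cᶜ)) ⊔ (aᶜ ⊓ (bᶜ ⊓ (a ⊔ c)))))  := by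
    calc ((a ⊓ c) ⊔ (b ⊓ c)) ⊔ ((a ⊓ cᶜ) ⊔ (b ⊓ cᶜ)) ⊔ (aᶜ ⊓ (bᶜ ⊓ (a ⊔ c)))
        = (((b ⊓ c) ⊔ (b ⊓ cᶜ)) ⊔ (a ⊓ cᶜ)) ⊔ ((a ⊓ c) ⊔ (aᶜ ⊓ (bᶜ ⊓ (a ⊔ c)))) := by ac_rfl
      _ = (b ⊔ (a ⊓ cᶜ)) ⊔ ((a ⊓ c) ⊔ (aᶜ ⊓ (bᶜ ⊓ (a ⊔ c)))) := by rw [← hbc]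
      _ = (b ⊔ (a ⊓ (bᶜ ⊓ cᶜ))) ⊔ ((a ⊓ c) ⊔ (aᶜ ⊓ (bᶜ ⊓ (a ⊔ c)))) := by rw [E1]
      _ = b ⊔ ((a ⊓ c) ⊔ ((a ⊓ (bᶜ ⊓ cᶜ)) ⊔ (aᶜ ⊓ (bᶜ ⊓ (a ⊔ c))))) := by ac_rfl
  have hR : ((a ⊓ b) ⊔ (a ⊓ c)) ⊔ (a ⊓ (bᶜ ⊓ cᶜ)) ⊔ ((aᶜ ⊓ b) ⊔ (aᶜ ⊓ (a ⊔ c)))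
      = b ⊔ ((a ⊓ c) ⊔ ((a ⊓ (bᶜ ⊓ cᶜ)) ⊔ (aᶜ ⊓ (bᶜ ⊓ (a ⊔ c)))))  := by
    calc ((a ⊓ b) ⊔ (a ⊓ c)) ⊔ (a ⊓ (bᶜ ⊓ cᶜ)) ⊔ ((aᶜ ⊓ b) ⊔ (aᶜ ⊓ (a ⊔ c)))
        = (((b ⊓ a) ⊔ (b ⊓ aᶜ)) ⊔ (aᶜ ⊓ (a ⊔ c))) ⊔ ((a ⊓ c) ⊔ (a ⊓ (bᶜ ⊓ cᶜ))) := by ac_rfl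
      _ = (b ⊔ (aᶜ ⊓ (a ⊔ c))) ⊔ ((a ⊓ c) ⊔ (a ⊓ (bᶜ ⊓ cᶜ))) := by rw [← hba']
      _ = (b ⊔ (aᶜ ⊓ (bᶜ ⊓ (a ⊔ c)))) ⊔ ((a ⊓ c) ⊔ (a ⊓ (bᶜ ⊓ cᶜ))) := by rw [E2]
      _ = b ⊔ ((a ⊓ c) ⊔ ((a ⊓ (bᶜ ⊓ cᶜ)) ⊔ (aᶜ ⊓ (bᶜ ⊓ (a ⊔ c))))) := by ac_rfl
  rw [hL, hR]
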